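/- arXiv:math/0309366 — 2 statements merged into one kernel-verified Lean document; each statement's English description precedes it below -/
import Mathlib

section
/- For every integer k ≥ 1, define ℓ^{(k)}(n) := (1/k)·ℓ(k·n) for n ≠ 0 and ℓ^{(k)}(0) := (1/k)·ℓ(0) + ((k² − 1)/(24k))·c. Then the family ℓ^{(k)} together with the central element k·c again satisfies the Virasoro relations: ⁅ℓ^{(k)}(m), ℓ^{(k)}(n)⁆ = (m − n)·ℓ^{(k)}(m + n) + ((m³ − m)/12)·δ_{m,−n}·(k·c) for all integers m, n, and ⁅ℓ^{(k)}(n), k·c⁆ = 0. (Thus composing a Virasoro representation of central charge c with the rescaling L_n ↦ (1/k)L_{kn} yields a Virasoro representation of central charge k·c.) -/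
/-!
Central elements drop out of brackets, so `⁅ℓ⁽ᵏ⁾ m, ℓ⁽ᵏ⁾ n⁆ = k⁻² ⁅ℓ (k m), ℓ (k n)⁆`, which the
Virasoro relation for `ℓ` evaluates. For `m + n ≠ 0` this is `(m - n) ℓ⁽ᵏ⁾ (m + n)` on the nose.
For `n = -m` the central term `k⁻² ((k m)³ - k m) / 12` of the left side equals `k (m³ - m) / 12`
plus `m - n = 2m` times the shift `(k² - 1) / (24 k)` of `ℓ⁽ᵏ⁾ 0`.
-/

section

variable (K : Type*) {L : Type*} [Field K] [LieRing L] [LieAlgebra K L]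

structure IsVirasoro (ℓ : ℤ → L) (c : L) : Prop where
  lie_eq : ∀ m n : ℤ, ⁅ℓ m, ℓ n⁆ =
    ((m - n : ℤ) : K) • ℓ (m + n) + (if m + n = 0 then ((m : K) ^ 3 - (m : K)) / 12 else 0) • c
  lie_central : ∀ n : ℤ, ⁅ℓ n, c⁆ = 0

def virasoroRescale (k : ℤ) (ℓ : ℤ → L) (c : L) (n : ℤ) : L :=
  (k : K)⁻¹ • ℓ (k * n) + (if n = 0 then ((k : K) ^ 2 - 1) / (24 * k) else 0) • c

variable {K}

namespace IsVirasoro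

variable {ℓ : ℤ → L} {c : L}

theorem central_lie (h : IsVirasoro K ℓ c) (n : ℤ) : ⁅c, ℓ n⁆ = 0 := by
  rw [← lie_skew, h.lie_central, neg_zero]

theorem lie_virasoroRescale (h : IsVirasoro K ℓ c) (k m n : ℤ) :
    ⁅virasoroRescale K k ℓ c m, virasoroRescale K k ℓ c n⁆ =
      ((k : K) ^ 2)⁻¹ • ⁅ℓ (k * m), ℓ (k * n)⁆ := by
  simp only [virasoroRescale, add_lie, lie_add, smul_lie, lie_smul, h.lie_central,
    h.central_lie, lie_self, smul_zero, add_zero, smul_smul]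
  rw [← mul_inv, sq]

variable [CharZero K]

theorem rescale {k : ℤ} (h : IsVirasoro K ℓ c) (hk : k ≠ 0) :
    IsVirasoro K (virasoroRescale K k ℓ c) ((k : K) • c) where
  lie_eq m n := by
    have hk' : (k : K) ≠ 0 := Int.cast_ne_zero.mpr hk
    rw [h.lie_virasoroRescale, h.lie_eq, ← mul_add, virasoroRescale]
    by_cases hmn : m + n = 0
    · obtain rfl : n = -m := by omega
      simp only [add_neg_cancel, mul_zero, if_true]
      push_cast
      match_scalars
      · field_simp
      · field_simp
        ring
    · simp only [hmn, mul_eq_zero, hk, false_or, if_false, zero_smul, add_zero]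
      rw [smul_smul, smul_smul]
      congr 1
      push_cast
      field_simp
  lie_central n := by
    simp only [_root_.virasoroRescale, lie_smul, add_lie, smul_lie, h.lie_central, lie_self,
      smul_zero, add_zero]

end IsVirasoro

end

/-- If `ℓ : ℤ → L` together with a central element `c` satisfies the Virasoro relations
with central charge `c`, then for every integer `k ≥ 1` the rescaled family
`ℓ⁽ᵏ⁾ n = (1/k) • ℓ (k n)` for `n ≠ 0`, `ℓ⁽ᵏ⁾ 0 = (1/k) • ℓ 0 + ((k² - 1)/(24 k)) • c`,
together with the central element `k • c`, again satisfies the Virasoro relations;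
i.e. the rescaling `L_n ↦ (1/k) L_{kn}` turns central charge `c` into `k • c`. -/
theorem virasoro_rescaling (L : Type*) [LieRing L] [LieAlgebra ℂ L] (ℓ : ℤ → L) (c : L)
    (hc : ∀ n : ℤ, ⁅ℓ n, c⁆ = 0)
    (hVir : ∀ m n : ℤ, ⁅ℓ m, ℓ n⁆ =
      ((m - n : ℤ) : ℂ) • ℓ (m + n) +
        (if m + n = 0 then ((m : ℂ) ^ 3 - (m : ℂ)) / 12 else 0) • c)
    (k : ℤ) (hk : 1 ≤ k)
    (ℓk : ℤ → L)
    (hℓk0 : ℓk 0 = (k : ℂ)⁻¹ • ℓ 0 + (((k : ℂ) ^ 2 - 1) / (24 * (k : ℂ))) • c)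
    (hℓk : ∀ n : ℤ, n ≠ 0 → ℓk n = (k : ℂ)⁻¹ • ℓ (k * n)) :
    (∀ m n : ℤ, ⁅ℓk m, ℓk n⁆ =
      ((m - n : ℤ) : ℂ) • ℓk (m + n) +
        (if m + n = 0 then ((m : ℂ) ^ 3 - (m : ℂ)) / 12 else 0) • ((k : ℂ) • c)) ∧
    (∀ n : ℤ, ⁅ℓk n, (k : ℂ) • c⁆ = 0) := by
  have hℓk_eq : ℓk = virasoroRescale ℂ k ℓ c := by
    funext n
    by_cases hn : n = 0
    · simp [hn, hℓk0, virasoroRescale]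
    · simp [hn, hℓk n hn, virasoroRescale]
  subst hℓk_eq
  have h := (IsVirasoro.mk hVir hc).rescale (by omega : k ≠ 0)
  exact ⟨h.lie_eq, h.lie_central⟩
end

section
/- Let α, β ∈ ℂ with |α|² − |β|² = 1 and let n ≥ 1 be an integer. Then there exists a continuous map h : S¹ → S¹ defined on the whole circle such that h(z)ⁿ = (α·zⁿ + β)/(β̄·zⁿ + ᾱ) for all z ∈ S¹. (This is the existence of the lift M_g^{(n)} satisfying M_g^{(n)}(z)ⁿ = M_{ḡ}(zⁿ), the geometric core of the embedding of the n-cover of the Möbius group into Diff(S¹).) -/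
/-!
On the unit circle `w w̄ = 1`, so `α w + β = w u` and `β̄ w + ᾱ = ū` with `u = α + β w̄`; thus the
Möbius map is `w ↦ w · u / ū`. Writing `u = α v` with `v = 1 + (β / α) w̄`, the bound
`|β| < |α|` keeps `v` in the right half-plane, so `v / v̄ = v² / |v|²` never meets the negative
real axis and has a continuous principal `n`-th root. Hence
`h z = z · (α / ᾱ)^(1/n) · (v / v̄)^(1/n)` with `w = zⁿ` is the required lift.
-/

open Complex ComplexConjugate

namespace Complex

lemma div_conj_mem_slitPlane {z : ℂ} (hz : 0 < z.re) : z / conj z ∈ slitPlane := by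
  rcases eq_or_ne z.im 0 with him | him
  · have hz0 : z ≠ 0 := ne_of_apply_ne re hz.ne'
    rw [conj_eq_iff_im.2 him, div_self hz0]
    exact one_mem_slitPlane
  · have hN : 0 < normSq z := normSq_pos.2 (ne_of_apply_ne re hz.ne')
    have h_im : (z / conj z).im = 2 * z.re * z.im / normSq z := by
      rw [div_im, conj_re, conj_im, normSq_conj]
      ring
    rw [mem_slitPlane_iff, h_im]
    exact Or.inr (div_ne_zero (mul_ne_zero (mul_ne_zero two_ne_zero hz.ne') him) hN.ne')

lemma re_one_add_pos_of_norm_lt_one {x : ℂ} (hx : ‖x‖ < 1) : 0 < (1 + x).re := by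
  rw [add_re, one_re]
  linarith [neg_abs_le x.re, abs_re_le_norm x]

lemma moebius_eq_mul_div_conj (α β : ℂ) {w : ℂ} (hw : ‖w‖ = 1) :
    (α * w + β) / (conj β * w + conj α) = w * ((α + β * conj w) / conj (α + β * conj w)) := by
  have hw' : w * conj w = 1 := by rw [mul_conj', hw, ofReal_one, one_pow]
  rw [mul_div_assoc', map_add, map_mul, conj_conj]
  congr 1
  · linear_combination -β * hw'
  · ring

end Complex

lemma Continuous.div_conj_cpow {X : Type*} [TopologicalSpace X] {f : X → ℂ} (hf : Continuous f)
    (hre : ∀ x, 0 < (f x).re) (s : ℂ) : Continuous fun x => (f x / conj (f x)) ^ s := by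
  have hf_ne : ∀ x, conj (f x) ≠ 0 := fun x => (map_ne_zero _).2 (ne_of_apply_ne re (hre x).ne')
  exact (hf.div (continuous_conj.comp hf) hf_ne).cpow continuous_const
    fun x => div_conj_mem_slitPlane (hre x)

/-- Let `((α, β), (conj β, conj α))` be an `SU(1,1)` matrix, acting on the circle by
`g(w) = (α w + β)/(conj β w + conj α)`, and let `n ≥ 1`. Then there is a continuous map
`h : S¹ → S¹`, defined on the whole circle, with `h(z)ⁿ = g(zⁿ)` for all `z ∈ S¹`:
this is the lift `M_g⁽ⁿ⁾` with `M_g⁽ⁿ⁾(z)ⁿ = M_g(zⁿ)`, the geometric core of the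
embedding of the `n`-cover of the Möbius group into `Diff(S¹)`. -/
theorem exists_nth_cover_lift_of_moebius (α β : ℂ)
    (h : ‖α‖ ^ 2 - ‖β‖ ^ 2 = 1) (n : ℕ) (hn : 1 ≤ n) :
    ∃ f : {z : ℂ // ‖z‖ = 1} → ℂ,
      Continuous f ∧ (∀ z, ‖f z‖ = 1) ∧
      ∀ z : {z : ℂ // ‖z‖ = 1},
        (f z) ^ n =
          (α * (z : ℂ) ^ n + β) / ((starRingEnd ℂ) β * (z : ℂ) ^ n + (starRingEnd ℂ) α) := by
  have hn0 : n ≠ 0 := Nat.one_le_iff_ne_zero.1 hn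
  have hβα : ‖β‖ < ‖α‖ := by nlinarith [norm_nonneg α, norm_nonneg β]
  have hα : α ≠ 0 := norm_pos_iff.1 ((norm_nonneg β).trans_lt hβα)
  set v : {z : ℂ // ‖z‖ = 1} → ℂ := fun z => 1 + β / α * conj ((z : ℂ) ^ n) with hv
  have hv_re : ∀ z, 0 < (v z).re := fun z => re_one_add_pos_of_norm_lt_one <| by
    rwa [norm_mul, norm_conj, norm_pow, z.2, one_pow, mul_one, norm_div,
      div_lt_one (norm_pos_iff.2 hα)]
  have hv_ne : ∀ z, v z ≠ 0 := fun z => ne_of_apply_ne re (hv_re z).ne'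
  refine ⟨fun z => z * (α / conj α) ^ (n⁻¹ : ℂ) * (v z / conj (v z)) ^ (n⁻¹ : ℂ), ?_, ?_, ?_⟩
  · exact (continuous_subtype_val.mul continuous_const).mul
      ((by fun_prop : Continuous v).div_conj_cpow hv_re _)
  · intro z
    simp [norm_cpow_inv_nat, z.2, hα, hv_ne z]
  · intro z
    have hu : α + β * conj ((z : ℂ) ^ n) = α * v z := by
      rw [hv, mul_add, mul_one, ← mul_assoc, mul_div_cancel₀ _ hα]
    rw [mul_pow, mul_pow, cpow_nat_inv_pow _ hn0, cpow_nat_inv_pow _ hn0,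
      moebius_eq_mul_div_conj α β (by rw [norm_pow, z.2, one_pow]), hu, map_mul,
      mul_div_mul_comm, mul_assoc]
end
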